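/- arXiv:2110.08166 — 3 statements merged into one kernel-verified Lean document; each statement's English description precedes it below -/
import Mathlib

section
/- The sequence A_L = (∑_{s=2}^{L+1} 1.73^{s-1}/((s-1)!)) / (∑_{t=1}^{L} 1.73^t/((t+1)!)) is strictly increasing in L. -/
/-!
Write `b t = a ^ t / t!`. Since `a ^ t / (t + 1)! = b t / (t + 1)`, the sequence is
`A_L = (∑_{t=1}^L b t) / (∑_{t=1}^L b t / (t + 1))`, and passing from `L` to `L + 1` adds the
fraction `b (L+1) / (b (L+1) / (L + 2)) = L + 2` to it as a mediant. The mediant of two fractions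
lies strictly above the smaller one, and `A_L < L + 2` because every weight `1 / (t + 1)` with
`t ≤ L` exceeds `1 / (L + 2)`.
-/

open Finset

section OrderedField

variable {K : Type*} [Field K] [LinearOrder K] [IsStrictOrderedRing K]

theorem div_lt_add_div_add {a b c d : K} (hb : 0 < b) (hd : 0 < d) (h : a / b < c / d) :
    a / b < (a + c) / (b + d) := by
  rw [div_lt_div_iff₀ hb hd] at h
  rw [div_lt_div_iff₀ hb (add_pos hb hd)]
  linear_combination h

theorem sum_Icc_lt_mul_sum_Icc_div_succ {b : ℕ → K} (hb : ∀ t, 0 < b t) {L : ℕ} (hL : 1 ≤ L) :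
    ∑ t ∈ Icc 1 L, b t < ((L : K) + 2) * ∑ t ∈ Icc 1 L, b t / ((t : K) + 1) := by
  rw [mul_sum]
  refine sum_lt_sum_of_nonempty (nonempty_Icc.2 hL) fun t ht => ?_
  have htL : (t : K) + 1 < L + 2 := by
    have : (t : K) ≤ L := by exact_mod_cast (mem_Icc.1 ht).2
    linarith
  rw [← mul_div_assoc, lt_div_iff₀ (by positivity), mul_comm (b t)]
  exact mul_lt_mul_of_pos_right htL (hb t)

theorem strictMonoOn_sum_Icc_div_sum_Icc_div_succ {b : ℕ → K} (hb : ∀ t, 0 < b t) :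
    StrictMonoOn
      (fun L : ℕ => (∑ t ∈ Icc 1 L, b t) / ∑ t ∈ Icc 1 L, b t / ((t : K) + 1)) (Set.Ici 1) := by
  refine strictMonoOn_of_lt_add_one Set.ordConnected_Ici fun L _ hL _ => ?_
  have hL : 1 ≤ L := hL
  have hden : 0 < ∑ t ∈ Icc 1 L, b t / ((t : K) + 1) :=
    sum_pos (fun t _ => div_pos (hb t) (by positivity)) (nonempty_Icc.2 hL)
  have hnew : b (L + 1) / (b (L + 1) / (((L + 1 : ℕ) : K) + 1)) = (L : K) + 2 := by
    rw [div_div_cancel₀ (hb (L + 1)).ne']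
    push_cast
    ring
  simp only [sum_Icc_succ_top (Nat.le_add_left 1 L)]
  refine div_lt_add_div_add hden (div_pos (hb _) (by positivity)) ?_
  rw [hnew, div_lt_iff₀ hden]
  exact sum_Icc_lt_mul_sum_Icc_div_succ hb hL

end OrderedField

theorem sum_Icc_two_succ_comp_pred {M : Type*} [AddCommMonoid M] (f : ℕ → M) (L : ℕ) :
    ∑ s ∈ Icc 2 (L + 1), f (s - 1) = ∑ t ∈ Icc 1 L, f t := by
  rw [← map_add_right_Icc 1 L 1, sum_map]
  simp

theorem pow_div_factorial_succ (a : ℝ) (t : ℕ) :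
    a ^ t / ((t + 1).factorial : ℝ) = a ^ t / (t.factorial : ℝ) / ((t : ℝ) + 1) := by
  rw [Nat.factorial_succ, div_div]
  push_cast
  ring

theorem stmt_10 :
    StrictMonoOn
      (fun L : ℕ =>
        (∑ s ∈ Finset.Icc 2 (L + 1), (1.73 : ℝ) ^ (s - 1) / (Nat.factorial (s - 1) : ℝ)) /
        (∑ t ∈ Finset.Icc 1 L, (1.73 : ℝ) ^ t / (Nat.factorial (t + 1) : ℝ)))
      (Set.Ici 1) := by
  simp only [sum_Icc_two_succ_comp_pred (fun t => (1.73 : ℝ) ^ t / (t.factorial : ℝ)),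
    pow_div_factorial_succ]
  exact strictMonoOn_sum_Icc_div_sum_Icc_div_succ fun t => by positivity
end

section
/- Define r_L = ΔA_L/|ΔB_L| where ΔA_L = A_{L+1} - A_L and ΔB_L = B_{L+1} - B_L, with A_L, B_L as above (a = 1.73). Then r_L = ∑_{i=1}^{L} a^i (L + 1 - i)/((i+1)!), and this sequence is strictly increasing in L. -/
/-!
Write `c_L = ∑_{t=1}^{L} a^t/(t+1)!` and `n_L = ∑_{t=1}^{L} a^t/t!`, so that `A_L = n_L/c_L` and
`B_L = 1/c_L`. Passing from `L` to `L+1` adds `d = a^{L+1}/(L+2)!` to `c_L` and `(L+2) d` to `n_L`,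
and then `ΔA_L/|ΔB_L| = (L+2) c_L - n_L`, whose terms are `a^i (L+1-i)/(i+1)!`. This expression
grows by exactly `c_{L+1} > 0` from `L` to `L+1`.
-/

open Real Finset

open scoped Nat

noncomputable section

def sumPowDivFactorial (a : ℝ) (L : ℕ) : ℝ := ∑ t ∈ Icc 1 L, a ^ t / (t ! : ℝ)

def sumPowDivSuccFactorial (a : ℝ) (L : ℕ) : ℝ := ∑ t ∈ Icc 1 L, a ^ t / ((t + 1)! : ℝ)

end

theorem div_sub_div_div_abs_inv_sub_inv {n c d : ℝ} (k : ℝ) (hc : 0 < c) (hd : 0 < d) :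
    ((n + k * d) / (c + d) - n / c) / |1 / (c + d) - 1 / c| = k * c - n := by
  have hcd : 0 < c + d := by positivity
  have hdiff : 1 / (c + d) - 1 / c = -(d / (c * (c + d))) := by
    field_simp
    ring
  rw [hdiff, abs_neg, abs_of_pos (by positivity)]
  field_simp
  ring

namespace sumPowDivFactorial

theorem succ (a : ℝ) (L : ℕ) :
    sumPowDivFactorial a (L + 1) =
      sumPowDivFactorial a L + (L + 2) * (a ^ (L + 1) / (L + 2)!) := by
  rw [sumPowDivFactorial, sumPowDivFactorial, sum_Icc_succ_top (by omega), Nat.factorial_succ (L + 1)]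
  push_cast
  field_simp
  ring

theorem eq_sum_Icc_two (a : ℝ) (L : ℕ) :
    sumPowDivFactorial a L = ∑ s ∈ Icc 2 (L + 1), a ^ (s - 1) / ((s - 1)! : ℝ) := by
  rw [← map_add_right_Icc 1 L 1, sum_map]
  simp [sumPowDivFactorial]

end sumPowDivFactorial

namespace sumPowDivSuccFactorial

theorem succ (a : ℝ) (L : ℕ) :
    sumPowDivSuccFactorial a (L + 1) = sumPowDivSuccFactorial a L + a ^ (L + 1) / (L + 2)! :=
  sum_Icc_succ_top (by omega) _

theorem pos {a : ℝ} (ha : 0 < a) {L : ℕ} (hL : 1 ≤ L) : 0 < sumPowDivSuccFactorial a L :=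
  sum_pos (fun _ _ => by positivity) ⟨1, by simp [hL]⟩

theorem add_two_mul_sub_sumPowDivFactorial_eq_sum (a : ℝ) (L : ℕ) :
    (L + 2) * sumPowDivSuccFactorial a L - sumPowDivFactorial a L =
      ∑ i ∈ Icc 1 L, a ^ i * ((L : ℝ) + 1 - i) / ((i + 1)! : ℝ) := by
  rw [sumPowDivSuccFactorial, sumPowDivFactorial, mul_sum, ← sum_sub_distrib]
  refine sum_congr rfl fun i _ => ?_
  rw [Nat.factorial_succ]
  push_cast
  field_simp
  ring

theorem add_two_mul_sub_sumPowDivFactorial_succ (a : ℝ) (L : ℕ) :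
    ((L + 1 : ℕ) + 2) * sumPowDivSuccFactorial a (L + 1) - sumPowDivFactorial a (L + 1) =
      (L + 2) * sumPowDivSuccFactorial a L - sumPowDivFactorial a L +
        sumPowDivSuccFactorial a (L + 1) := by
  rw [sumPowDivFactorial.succ, succ]
  push_cast
  ring

end sumPowDivSuccFactorial

open sumPowDivSuccFactorial in
theorem stmt_12
    (A B r : ℕ → ℝ)
    (hA : ∀ L, A L = (∑ s ∈ Finset.Icc 2 (L + 1),
        (1.73 : ℝ) ^ (s - 1) / (Nat.factorial (s - 1) : ℝ)) /
        (∑ t ∈ Finset.Icc 1 L, (1.73 : ℝ) ^ t / (Nat.factorial (t + 1) : ℝ)))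
    (hB : ∀ L, B L = 1 / ∑ t ∈ Finset.Icc 1 L, (1.73 : ℝ) ^ t / (Nat.factorial (t + 1) : ℝ))
    (hr : ∀ L, r L = (A (L + 1) - A L) / |B (L + 1) - B L|) :
    (∀ L : ℕ, 1 ≤ L →
      r L = ∑ i ∈ Finset.Icc 1 L,
        (1.73 : ℝ) ^ i * ((L : ℝ) + 1 - (i : ℝ)) / (Nat.factorial (i + 1) : ℝ)) ∧
    StrictMonoOn r (Set.Ici 1) := by
  set a : ℝ := 1.73
  have ha : 0 < a := by norm_num
  set g : ℕ → ℝ := fun L => (L + 2) * sumPowDivSuccFactorial a L - sumPowDivFactorial a L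
  have hrg : ∀ L, 1 ≤ L → r L = g L := by
    intro L hL
    have hA' : ∀ L, A L = sumPowDivFactorial a L / sumPowDivSuccFactorial a L := fun L => by
      rw [hA, sumPowDivFactorial.eq_sum_Icc_two]; rfl
    rw [hr, hA', hA', hB, hB, sumPowDivFactorial.succ, ← sumPowDivSuccFactorial, succ]
    exact div_sub_div_div_abs_inv_sub_inv _ (pos ha hL) (by positivity)
  have hg : StrictMono g := strictMono_nat_of_lt_succ fun L => by
    simp only [g, add_two_mul_sub_sumPowDivFactorial_succ]
    linarith [pos ha L.succ_pos]
  exact ⟨fun L hL => (hrg L hL).trans (add_two_mul_sub_sumPowDivFactorial_eq_sum a L),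
    fun x hx y hy hxy => by rw [hrg x hx, hrg y hy]; exact hg hxy⟩
end

section
/- For a = 1.73 and p ∈ (0, 1), the function f̃(p) = e^{ap} - ap + ln(1-p) - 1 is strictly negative. -/
/-! For `a ≤ 2` the function `a² e^{ap} (1 - p)²` decreases on `[0, 1]`, and `f̃''` has the sign of
this quantity minus one; for `a ≥ 1` it starts at `a² ≥ 1`, so `f̃` is convex on some `[0, c]` and
concave on `[c, 1)`. For `a = 1.73` the tangent at `m = 0.812`, close to the local maximum
`f̃ ≈ -0.0015`, is negative on all of `[0, 1]`. Concavity puts `f̃` below it on `[c, 1)`, in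
particular `f̃ c < 0`, and convexity with `f̃ 0 = 0` handles `(0, c]`. -/

open Real Set

noncomputable def fTilde (a p : ℝ) : ℝ := exp (a * p) - a * p + log (1 - p) - 1

theorem fTilde_zero (a : ℝ) : fTilde a 0 = 0 := by simp [fTilde]

/-- `(1 - p)² f̃''(p) = fTildeCurvature a p - 1`, see `fTilde.deriv2_eq`. -/
noncomputable def fTildeCurvature (a p : ℝ) : ℝ := a ^ 2 * exp (a * p) * (1 - p) ^ 2

theorem ConcaveOn.le_add_mul_sub_of_hasDerivAt {S : Set ℝ} {f : ℝ → ℝ} {x y f' : ℝ}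
    (hf : ConcaveOn ℝ S f) (hx : x ∈ S) (hy : y ∈ S) (hf' : HasDerivAt f f' x) :
    f y ≤ f x + f' * (y - x) := by
  rcases lt_trichotomy x y with hxy | rfl | hxy
  · have h := hf.slope_le_of_hasDerivAt hx hy hxy hf'
    rw [slope_def_field, div_le_iff₀ (sub_pos.2 hxy)] at h
    linarith
  · simp
  · have h := hf.le_slope_of_hasDerivAt hy hx hxy hf'
    rw [slope_def_field, le_div_iff₀ (sub_pos.2 hxy)] at h
    linarith

theorem ConvexOn.neg_of_mem_Ioc {f : ℝ → ℝ} {c p : ℝ} (hf : ConvexOn ℝ (Icc 0 c) f)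
    (h0 : f 0 ≤ 0) (hc : f c < 0) (hp : p ∈ Ioc 0 c) : f p < 0 := by
  obtain ⟨hp0, hpc⟩ := hp
  have hc0 : 0 < c := hp0.trans_le hpc
  have h := hf.2 (left_mem_Icc.2 hc0.le) (right_mem_Icc.2 hc0.le)
    (sub_nonneg.2 ((div_le_one hc0).2 hpc)) (div_nonneg hp0.le hc0.le) (sub_add_cancel 1 (p / c))
  simp only [smul_eq_mul, mul_zero, zero_add, div_mul_cancel₀ p hc0.ne'] at h
  nlinarith [div_pos hp0 hc0, sub_nonneg.2 ((div_le_one hc0).2 hpc)]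

namespace fTilde

variable {a p : ℝ}

theorem hasDerivAt (a : ℝ) (hp : p < 1) :
    HasDerivAt (fTilde a) (a * exp (a * p) - a - (1 - p)⁻¹) p := by
  have hlin : HasDerivAt (fun p ↦ a * p) a p := hasDerivAt_const_mul a
  have hlog := ((hasDerivAt_id' p).const_sub 1).log (sub_ne_zero.2 hp.ne')
  refine ((hlin.exp.sub hlin).add hlog).sub_const 1 |>.congr_deriv ?_
  field_simp
  ring

theorem hasDerivAt_deriv (a : ℝ) (hp : p < 1) :
    HasDerivAt (fun p ↦ a * exp (a * p) - a - (1 - p)⁻¹)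
      (a ^ 2 * exp (a * p) - ((1 - p) ^ 2)⁻¹) p := by
  have hlin : HasDerivAt (fun p ↦ a * p) a p := hasDerivAt_const_mul a
  have hinv := ((hasDerivAt_id' p).const_sub 1).inv (sub_ne_zero.2 hp.ne')
  refine ((hlin.exp.const_mul a).sub_const a).sub hinv |>.congr_deriv ?_
  field_simp

theorem deriv2_eq (hp : p < 1) :
    a ^ 2 * exp (a * p) - ((1 - p) ^ 2)⁻¹ = (fTildeCurvature a p - 1) / (1 - p) ^ 2 := by
  have : 1 - p ≠ 0 := sub_ne_zero.2 hp.ne'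
  rw [fTildeCurvature]
  field_simp

theorem convexOn_of_one_le_curvature {D : Set ℝ} (hD : Convex ℝ D) (hD1 : D ⊆ Iio 1)
    (h : ∀ p ∈ interior D, 1 ≤ fTildeCurvature a p) : ConvexOn ℝ D (fTilde a) := by
  have hint : ∀ p ∈ interior D, p < 1 := fun p hp ↦ hD1 (interior_subset hp)
  refine convexOn_of_hasDerivWithinAt2_nonneg hD
    (fun p hp ↦ (hasDerivAt a (hD1 hp)).continuousAt.continuousWithinAt)
    (fun p hp ↦ (hasDerivAt a (hint p hp)).hasDerivWithinAt)
    (fun p hp ↦ (hasDerivAt_deriv a (hint p hp)).hasDerivWithinAt) fun p hp ↦ ?_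
  rw [deriv2_eq (hint p hp)]
  exact div_nonneg (sub_nonneg.2 (h p hp)) (sq_nonneg _)

theorem concaveOn_of_curvature_le_one {D : Set ℝ} (hD : Convex ℝ D) (hD1 : D ⊆ Iio 1)
    (h : ∀ p ∈ interior D, fTildeCurvature a p ≤ 1) : ConcaveOn ℝ D (fTilde a) := by
  have hint : ∀ p ∈ interior D, p < 1 := fun p hp ↦ hD1 (interior_subset hp)
  refine concaveOn_of_hasDerivWithinAt2_nonpos hD
    (fun p hp ↦ (hasDerivAt a (hD1 hp)).continuousAt.continuousWithinAt)
    (fun p hp ↦ (hasDerivAt a (hint p hp)).hasDerivWithinAt)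
    (fun p hp ↦ (hasDerivAt_deriv a (hint p hp)).hasDerivWithinAt) fun p hp ↦ ?_
  rw [deriv2_eq (hint p hp)]
  exact div_nonpos_of_nonpos_of_nonneg (sub_nonpos.2 (h p hp)) (sq_nonneg _)

theorem continuous_curvature (a : ℝ) : Continuous (fTildeCurvature a) := by
  unfold fTildeCurvature
  fun_prop

theorem antitoneOn_curvature (ha : a ≤ 2) : AntitoneOn (fTildeCurvature a) (Icc 0 1) := by
  refine antitoneOn_of_hasDerivWithinAt_nonpos (convex_Icc 0 1)
    (continuous_curvature a).continuousOn
    (f' := fun p ↦ a ^ 2 * exp (a * p) * (1 - p) * (a * (1 - p) - 2))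
    (fun p _ ↦ HasDerivAt.hasDerivWithinAt ?_) fun p hp ↦ ?_
  · have hlin : HasDerivAt (fun p ↦ a * p) a p := hasDerivAt_const_mul a
    refine ((hlin.exp.const_mul (a ^ 2)).mul (((hasDerivAt_id' p).const_sub 1).pow 2))
      |>.congr_deriv ?_
    simp only [Pi.pow_apply]
    ring
  · rw [interior_Icc] at hp
    have h1 : 0 ≤ a ^ 2 * exp (a * p) * (1 - p) := by
      have := hp.2; positivity
    exact mul_nonpos_of_nonneg_of_nonpos h1 (by nlinarith [hp.1, hp.2])

theorem exists_convexOn_concaveOn {m : ℝ} (ha1 : 1 ≤ a) (ha2 : a ≤ 2) (hm : m ∈ Ico (0 : ℝ) 1)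
    (hcm : fTildeCurvature a m ≤ 1) :
    ∃ c ∈ Icc 0 m, ConvexOn ℝ (Icc 0 c) (fTilde a) ∧ ConcaveOn ℝ (Ico c 1) (fTilde a) := by
  have hc0 : 1 ≤ fTildeCurvature a 0 := by
    simp only [fTildeCurvature, mul_zero, exp_zero, sub_zero, one_pow, mul_one]
    exact one_le_pow₀ ha1
  obtain ⟨c, hc, hc1⟩ := intermediate_value_Icc' hm.1 (continuous_curvature a).continuousOn
    ⟨hcm, hc0⟩
  have hcI : c ∈ Icc (0 : ℝ) 1 := ⟨hc.1, hc.2.trans hm.2.le⟩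
  refine ⟨c, hc,
    convexOn_of_one_le_curvature (convex_Icc 0 c)
      (fun p hp ↦ hp.2.trans_lt (hc.2.trans_lt hm.2)) fun p hp ↦ ?_,
    concaveOn_of_curvature_le_one (convex_Ico c 1) (fun p hp ↦ hp.2) fun p hp ↦ ?_⟩
  · rw [interior_Icc] at hp
    exact hc1 ▸ antitoneOn_curvature ha2 ⟨hp.1.le, hp.2.le.trans hcI.2⟩ hcI hp.2.le
  · rw [interior_Ico] at hp
    exact hc1 ▸ antitoneOn_curvature ha2 hcI ⟨hcI.1.trans hp.1.le, hp.2.le⟩ hp.1.le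

theorem neg_of_tangent_neg {m : ℝ} (ha1 : 1 ≤ a) (ha2 : a ≤ 2) (hm : m ∈ Ico (0 : ℝ) 1)
    (hcm : fTildeCurvature a m ≤ 1)
    (hleft : fTilde a m - (a * exp (a * m) - a - (1 - m)⁻¹) * m < 0)
    (hright : fTilde a m + (a * exp (a * m) - a - (1 - m)⁻¹) * (1 - m) < 0)
    (hp : p ∈ Ioo (0 : ℝ) 1) : fTilde a p < 0 := by
  obtain ⟨c, hc, hconv, hconc⟩ := exists_convexOn_concaveOn ha1 ha2 hm hcm
  have hmc : m ∈ Ico c 1 := ⟨hc.2, hm.2⟩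
  have hneg : ∀ q ∈ Ico c 1, fTilde a q < 0 := fun q hq ↦ by
    have htan := hconc.le_add_mul_sub_of_hasDerivAt hmc hq (hasDerivAt a hm.2)
    have hq0 : 0 ≤ q := hc.1.trans hq.1
    nlinarith [hq.2]
  rcases le_or_gt p c with hpc | hcp
  · exact hconv.neg_of_mem_Ioc (fTilde_zero a).le (hneg c ⟨le_rfl, hc.2.trans_lt hm.2⟩)
      ⟨hp.1, hpc⟩
  · exact hneg p ⟨hcp.le, hp.2⟩

end fTilde

theorem exp_one_add_mem_Icc {x : ℝ} (hx : |x| ≤ 1) :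
    exp (1 + x) ∈ Icc (2.7182818283 * (∑ k ∈ Finset.range 8, x ^ k / k.factorial
        - |x| ^ 8 * (9 / (Nat.factorial 8 * 8))))
      (2.7182818286 * (∑ k ∈ Finset.range 8, x ^ k / k.factorial
        + |x| ^ 8 * (9 / (Nat.factorial 8 * 8)))) := by
  have h := abs_le.1 (Real.exp_bound hx (n := 8) (by norm_num))
  have hx0 := exp_pos x
  rw [exp_add]
  constructor <;> nlinarith [exp_one_gt_d9, exp_one_lt_d9]

theorem exp_mul_0_812_mem_Ioo : exp (1.73 * 0.812) ∈ Ioo 4.0745 4.0746 := by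
  have h := exp_one_add_mem_Icc (x := 0.40476) (by norm_num [abs_of_pos])
  rw [show (1.73 : ℝ) * 0.812 = 1 + 0.40476 by norm_num]
  norm_num [Finset.sum_range_succ, Nat.factorial, abs_of_pos] at h ⊢
  constructor <;> linarith [h.1, h.2]

theorem log_one_sub_0_812_le : log (1 - 0.812) ≤ -1.671 := by
  have h := (exp_one_add_mem_Icc (x := 0.671) (by norm_num [abs_of_pos])).2
  rw [log_le_iff_le_exp (by norm_num), exp_neg, show (1.671 : ℝ) = 1 + 0.671 by norm_num]
  norm_num [Finset.sum_range_succ, Nat.factorial, abs_of_pos] at h ⊢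
  rw [le_inv_comm₀ (by norm_num) (exp_pos _)]
  linarith

theorem stmt_15 (p : ℝ) (hp : p ∈ Set.Ioo (0 : ℝ) 1) :
    Real.exp (1.73 * p) - 1.73 * p + Real.log (1 - p) - 1 < 0 := by
  obtain ⟨hE₁, hE₂⟩ := exp_mul_0_812_mem_Ioo
  have hL := log_one_sub_0_812_le
  refine fTilde.neg_of_tangent_neg (m := 0.812) (by norm_num) (by norm_num) (by norm_num)
    ?_ ?_ ?_ hp
  all_goals norm_num [fTilde, fTildeCurvature] at hE₁ hE₂ hL ⊢; linarith
end
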